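/- Let C be an M(ℕ)-category and x a finitely supported object of C. If v and v̄ in M(ℕ) agree on supp(x), then v • x = v̄ • x and ι(v,x) = ι(v̄,x); consequently [v,u]^x = [v̄,u]^x and [u,v]^x = [u,v̄]^x for every u in M(ℕ). -/

import Mathlib

/-!
If `x` is supported on a finite set `S`, every injection `u` fixing `S` fixes `x`, so
`u ↦ ι(u,x)` is a monoid homomorphism from the injections fixing `S` into `Aut x`. Such a
homomorphism into a group is trivial: an injection `p` with infinitely many fixed points
outside `S` satisfies `p ∘ j = j` for some `j` fixing `S` with range in those fixed points,
and for every `u` fixing `S` one has `u' ∘ a = a ∘ u`, where `a` fixes `S` with range in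
`S ∪ evens` and `u'` fixes the odd numbers outside `S`. So `ι(u,x)` is the identity for every
`u` fixing `S`.

Finite supports are closed under intersection, hence `supp x` is the least finite support.
Writing `v = σ ∘ r` with `σ` a permutation agreeing with `v` on `supp x` and `r` fixing
`supp x` gives `ι(v,x) = ι(σ,x)`, and likewise for `w`.
-/

open CategoryTheory

/-- The monoid of injective self-maps of `U`, under composition. -/
def Minj (U : Type*) : Submonoid (Function.End U) where
  carrier := {f | Function.Injective f}
  mul_mem' := fun hf hg => hf.comp hg
  one_mem' := Function.injective_id

instance (U : Type*) : FunLike (Minj U) U U where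
  coe u := u.1
  coe_injective := fun _ _ h => Subtype.ext h

@[simp] lemma Minj.mul_apply {U : Type*} (u v : Minj U) (a : U) : (u * v) a = u (v a) := rfl

/-- `x` is supported on `A` if every injection fixing `A` elementwise fixes `x`. -/
def Supported {U : Type*} {X : Type*} [MulAction (Minj U) X] (A : Set U) (x : X) : Prop :=
  ∀ u : Minj U, (∀ a ∈ A, u a = a) → u • x = x

/-- `x` is finitely supported if it is supported on some finite subset of `U`. -/
def FinSupported {U : Type*} {X : Type*} [MulAction (Minj U) X] (x : X) : Prop :=
  ∃ A : Finset U, Supported (A : Set U) x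

/-- The support of `x`: the intersection of all finite subsets of `U` on which `x`
is supported. -/
def supp {U : Type*} {X : Type*} [MulAction (Minj U) X] (x : X) : Set U :=
  {i : U | ∀ A : Finset U, Supported (A : Set U) x → i ∈ A}

/-- An `M(U)`-category: a category with an action of the injection monoid on objects,
together with coherent isomorphisms `ι u x : x ≅ u • x`. The action of `u` on morphisms
is then given by conjugation with these isomorphisms. -/
structure MCat (U : Type*) (C : Type*) [Category C] [MulAction (Minj U) C] where
  ι : ∀ (u : Minj U) (x : C), x ≅ u • x
  ι_mul : ∀ (u v : Minj U) (x : C),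
    (ι u x).hom ≫ (ι v (u • x)).hom = (ι (v * u) x).hom ≫ eqToHom (mul_smul v u x)

namespace MCat

variable {U : Type*} {C : Type*} [Category C] [MulAction (Minj U) C]

/-- The action `u_*` of an injection on morphisms: `u_*(f) = ι(u,y) ∘ f ∘ ι(u,x)⁻¹`. -/
def act (h : MCat U C) (u : Minj U) {x y : C} (f : x ⟶ y) : u • x ⟶ u • y :=
  (h.ι u x).inv ≫ f ≫ (h.ι u y).hom

/-- The natural isomorphism `[v,u]^x := ι(v,x) ∘ ι(u,x)⁻¹ : u • x ⟶ v • x`. -/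
def tw (h : MCat U C) (v u : Minj U) (x : C) : u • x ⟶ v • x :=
  (h.ι u x).inv ≫ (h.ι v x).hom

@[simp] lemma act_id (h : MCat U C) (u : Minj U) (x : C) : h.act u (𝟙 x) = 𝟙 (u • x) := by
  simp [act]

@[simp] lemma act_comp (h : MCat U C) (u : Minj U) {x y z : C} (f : x ⟶ y) (g : y ⟶ z) :
    h.act u (f ≫ g) = h.act u f ≫ h.act u g := by
  simp [act]

lemma ι_natural (h : MCat U C) (u : Minj U) {x y : C} (f : x ⟶ y) :
    (h.ι u x).hom ≫ h.act u f = f ≫ (h.ι u y).hom := by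
  simp [act]

end MCat

namespace Minj

variable {U : Type*}

@[simp] lemma smul_def (u : Minj U) (a : U) : u • a = u a := rfl

lemma injective (u : Minj U) : Function.Injective u := u.2

def ofPerm : Equiv.Perm U →* Minj U where
  toFun σ := ⟨⇑σ, σ.injective⟩
  map_one' := rfl
  map_mul' _ _ := rfl

@[simp] lemma ofPerm_apply (σ : Equiv.Perm U) (a : U) : ofPerm σ a = σ a := rfl

lemma exists_perm_eqOn [Infinite U] {s : Set U} (hs : s.Finite) {f : U → U}
    (hf : Set.InjOn f s) : ∃ σ : Equiv.Perm U, Set.EqOn σ f s := by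
  have hlt : Cardinal.mk s < Cardinal.mk U := hs.lt_aleph0.trans_le (Cardinal.aleph0_le_mk U)
  obtain ⟨σ, hσ⟩ :=
    Cardinal.extend_function_of_lt ⟨_, hf.injective⟩ hlt ⟨Equiv.refl U⟩
  exact ⟨σ, fun a ha => hσ ⟨a, ha⟩⟩

open Classical in
noncomputable def piecewiseId (B : Set U) (f : Minj U) (hf : ∀ n, f n ∉ B) : Minj U :=
  ⟨fun n => if n ∈ B then n else f n, by
    intro m n hmn
    by_cases hm : m ∈ B <;> by_cases hn : n ∈ B <;> simp only [hm, hn, if_true, if_false] at hmn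
    · exact hmn
    · exact absurd (hmn ▸ hm) (hf n)
    · exact absurd (hmn ▸ hn) (hf m)
    · exact injective f hmn⟩

section piecewiseId

variable {B : Set U} {f : Minj U} {hf : ∀ n, f n ∉ B}

lemma piecewiseId_apply_of_mem {n : U} (hn : n ∈ B) : piecewiseId B f hf n = n :=
  if_pos hn

lemma piecewiseId_apply_of_notMem {n : U} (hn : n ∉ B) : piecewiseId B f hf n = f n :=
  if_neg hn

lemma piecewiseId_mem_fixingSubmonoid : piecewiseId B f hf ∈ fixingSubmonoid (Minj U) B :=
  (mem_fixingSubmonoid_iff _).2 fun _ => piecewiseId_apply_of_mem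

end piecewiseId

noncomputable def extendAlong (a u : Minj U) : Minj U :=
  ⟨Function.extend a (a ∘ u) id, by
    have ha := (injective a).extend_apply (a ∘ u) id
    have hoff := Function.extend_apply' (f := a) (a ∘ u) id
    intro m n hmn
    by_cases hm : ∃ m', a m' = m <;> by_cases hn : ∃ n', a n' = n
    · obtain ⟨m', rfl⟩ := hm; obtain ⟨n', rfl⟩ := hn
      rw [ha, ha] at hmn
      exact congrArg a (injective u (injective a hmn))
    · obtain ⟨m', rfl⟩ := hm
      rw [ha, hoff n hn] at hmn
      exact absurd ⟨_, hmn⟩ hn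
    · obtain ⟨n', rfl⟩ := hn
      rw [ha, hoff m hm] at hmn
      exact absurd ⟨_, hmn.symm⟩ hm
    · rwa [hoff m hm, hoff n hn] at hmn⟩

lemma extendAlong_mul (a u : Minj U) : extendAlong a u * a = a * u :=
  DFunLike.ext _ _ fun n => (injective a).extend_apply (a ∘ u) id n

lemma extendAlong_apply_of_notMem_range {a u : Minj U} {n : U} (hn : n ∉ Set.range a) :
    extendAlong a u n = n :=
  Function.extend_apply' _ _ _ hn

lemma extendAlong_mem_fixingSubmonoid {S : Set U} {a u : Minj U}
    (ha : a ∈ fixingSubmonoid (Minj U) S) (hu : u ∈ fixingSubmonoid (Minj U) S) :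
    extendAlong a u ∈ fixingSubmonoid (Minj U) S := by
  rw [mem_fixingSubmonoid_iff] at *
  intro s hs
  have hs' := DFunLike.congr_fun (extendAlong_mul a u) s
  simp only [mul_apply, smul_def] at hs' ha hu
  rw [ha s hs, hu s hs, ha s hs] at hs'
  simpa using hs'

lemma exists_mem_fixingSubmonoid_eq_ofPerm_mul {σ : Equiv.Perm U} {v : Minj U}
    {A : Set U} (hσ : Set.EqOn σ v A) : ∃ r ∈ fixingSubmonoid (Minj U) A, v = ofPerm σ * r :=
  ⟨ofPerm σ⁻¹ * v, (mem_fixingSubmonoid_iff _).2 fun a ha => by simp [← hσ ha],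
    by rw [← mul_assoc, ← map_mul, mul_inv_cancel, map_one, one_mul]⟩

lemma exists_mem_fixingSubmonoid_forall_mem {S T : Set ℕ} (hT : (T \ S).Infinite) :
    ∃ j ∈ fixingSubmonoid (Minj ℕ) S, ∀ n, j n ∈ S ∪ T := by
  let e := hT.natEmbedding
  have hf (n : ℕ) : (e n : ℕ) ∈ T \ S := (e n).2
  let f : Minj ℕ := ⟨fun n => e n, fun _ _ h => e.injective (Subtype.ext h)⟩
  refine ⟨piecewiseId S f fun n => (hf n).2, piecewiseId_mem_fixingSubmonoid, fun n => ?_⟩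
  by_cases hn : n ∈ S
  · rw [piecewiseId_apply_of_mem hn]; exact Or.inl hn
  · rw [piecewiseId_apply_of_notMem hn]; exact Or.inr (hf n).1

variable {G : Type*} [Group G] {S : Set ℕ}

lemma map_eq_one_of_infinite_fixedPoints (f : fixingSubmonoid (Minj ℕ) S →* G)
    (p : fixingSubmonoid (Minj ℕ) S) (hp : ({n | (p : Minj ℕ) n = n} \ S).Infinite) :
    f p = 1 := by
  obtain ⟨j, hj, hjp⟩ := exists_mem_fixingSubmonoid_forall_mem hp
  have hpj : p * ⟨j, hj⟩ = ⟨j, hj⟩ := Subtype.ext <| DFunLike.ext _ _ fun n =>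
    (hjp n).elim ((mem_fixingSubmonoid_iff _).1 p.2 _) id
  simpa using congrArg f hpj

theorem monoidHom_fixingSubmonoid_eq_one (hS : S.Finite) (f : fixingSubmonoid (Minj ℕ) S →* G) :
    f = 1 := by
  ext ⟨u, hu⟩
  have hEven : ({n | Even n} \ S).Infinite :=
    (Set.infinite_of_forall_exists_gt (s := {n | Even n}) fun k =>
      ⟨2 * k + 2, ⟨k + 1, by ring⟩, by omega⟩).sdiff hS
  have hOdd : ({n | Odd n} \ S).Infinite :=
    (Set.infinite_of_forall_exists_gt (s := {n | Odd n}) fun k =>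
      ⟨2 * k + 1, odd_two_mul_add_one k, by omega⟩).sdiff hS
  obtain ⟨a, ha, haS⟩ := exists_mem_fixingSubmonoid_forall_mem hEven
  -- `u'` fixes the odd numbers outside `S`, as they lie off the range of `a`.
  let u' : fixingSubmonoid (Minj ℕ) S :=
    ⟨extendAlong a u, extendAlong_mem_fixingSubmonoid ha hu⟩
  have hu' : f u' = 1 := by
    refine map_eq_one_of_infinite_fixedPoints f u' (hOdd.mono fun n hn => ⟨?_, hn.2⟩)
    refine extendAlong_apply_of_notMem_range fun ⟨m, hm⟩ => ?_
    rcases hm ▸ haS m with h | h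
    · exact hn.2 h
    · exact Nat.not_even_iff_odd.2 hn.1 h
  have hconj := congrArg f
    (Subtype.ext (extendAlong_mul a u) : u' * ⟨a, ha⟩ = ⟨a, ha⟩ * ⟨u, hu⟩)
  rw [map_mul, map_mul, hu', one_mul] at hconj
  exact mul_eq_left.1 hconj.symm

end Minj

section Supported

variable {U X : Type*} [MulAction (Minj U) X] {A : Set U} {x : X}

lemma supported_iff_fixingSubmonoid_le :
    Supported A x ↔ fixingSubmonoid (Minj U) A ≤ MulAction.stabilizerSubmonoid (Minj U) x := by
  simp [Supported, SetLike.le_def, mem_fixingSubmonoid_iff]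

lemma Supported.smul_eq_self (hx : Supported A x) {u : Minj U}
    (hu : u ∈ fixingSubmonoid (Minj U) A) :
    u • x = x :=
  supported_iff_fixingSubmonoid_le.1 hx hu

lemma Supported.smul_eq_of_eqOn [Infinite U] (hA : A.Finite) (hx : Supported A x) {v w : Minj U}
    (hvw : Set.EqOn v w A) : v • x = w • x := by
  obtain ⟨σ, hσ⟩ := Minj.exists_perm_eqOn hA (Minj.injective v).injOn
  obtain ⟨r, hr, rfl⟩ := Minj.exists_mem_fixingSubmonoid_eq_ofPerm_mul hσ
  obtain ⟨r', hr', rfl⟩ := Minj.exists_mem_fixingSubmonoid_eq_ofPerm_mul (hσ.trans hvw)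
  rw [mul_smul, mul_smul, hx.smul_eq_self hr, hx.smul_eq_self hr']

end Supported

section Nat

variable {X : Type*} [MulAction (Minj ℕ) X] {x : X}

lemma Supported.inter {A B : Set ℕ} (hA : A.Finite) (hB : B.Finite) (hxA : Supported A x)
    (hxB : Supported B x) : Supported (A ∩ B) x := by
  intro u hu
  obtain ⟨N, hN⟩ := (hB.union (hB.preimage (Minj.injective u).injOn)).bddAbove
  let shift : Minj ℕ := ⟨(· + (N + 1)), add_left_injective _⟩
  have hshift (n : ℕ) : shift n ∉ B ∪ u ⁻¹' B := fun h =>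
    (hN h).not_gt (show N < n + (N + 1) by omega)
  -- `d` moves everything off `B` beyond `B ∪ u⁻¹(B)`, so that `u * d` agrees on `A` with an
  -- injection `e` fixing `B`.
  let d := Minj.piecewiseId B shift fun n h => hshift n (Or.inl h)
  let e := Minj.piecewiseId B (u * shift) fun n h => hshift n (Or.inr h)
  have hed : Set.EqOn ⇑e ⇑(u * d) A := fun a ha => by
    by_cases haB : a ∈ B
    · rw [Minj.piecewiseId_apply_of_mem haB, Minj.mul_apply,
        show d a = a from Minj.piecewiseId_apply_of_mem haB, hu a ⟨ha, haB⟩]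
    · rw [Minj.piecewiseId_apply_of_notMem haB, Minj.mul_apply, Minj.mul_apply,
        show d a = shift a from Minj.piecewiseId_apply_of_notMem haB]
  calc u • x = (u * d) • x := by
        rw [mul_smul, hxB.smul_eq_self Minj.piecewiseId_mem_fixingSubmonoid]
    _ = e • x := (hxA.smul_eq_of_eqOn hA hed).symm
    _ = x := hxB.smul_eq_self Minj.piecewiseId_mem_fixingSubmonoid

lemma FinSupported.exists_supp_eq (hx : FinSupported (U := ℕ) x) :
    ∃ B : Finset ℕ, supp (U := ℕ) x = B ∧ Supported (B : Set ℕ) x := by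
  -- a support of minimal size is contained in every other support
  obtain ⟨B, hB, hmin⟩ :=
    (measure Finset.card).wf.has_min {B : Finset ℕ | Supported (B : Set ℕ) x} hx
  refine ⟨B, Set.ext fun i => ⟨fun hi => hi B hB, fun hi C hC => ?_⟩, hB⟩
  have hBC : Supported ((B ∩ C : Finset ℕ) : Set ℕ) x := by
    rw [Finset.coe_inter]
    exact hB.inter B.finite_toSet C.finite_toSet hC
  have hBC_eq := Finset.eq_of_subset_of_card_le Finset.inter_subset_left (not_lt.1 (hmin _ hBC))
  exact Finset.mem_of_mem_inter_right (hBC_eq ▸ hi)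

end Nat

namespace MCat

variable {U C : Type*} [Category C] [MulAction (Minj U) C] (h : MCat U C)

lemma ι_hom_congr (u : Minj U) {y z : C} (e : y = z) :
    (h.ι u y).hom = eqToHom e ≫ (h.ι u z).hom ≫ eqToHom (congrArg (u • ·) e).symm := by
  subst e
  simp

def stabilizerAut (x : C) : MulAction.stabilizerSubmonoid (Minj U) x →* Aut x :=
  MonoidHom.mk'
    (fun u => (h.ι u x ≪≫ eqToIso (MulAction.mem_stabilizerSubmonoid_iff.1 u.2) : Aut x))
    fun u v => by
    change _ = (h.ι v x ≪≫ eqToIso _) ≪≫ h.ι u x ≪≫ eqToIso _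
    ext
    have hmul := h.ι_mul v u x
    rw [h.ι_hom_congr u (MulAction.mem_stabilizerSubmonoid_iff.1 v.2)] at hmul
    simp only [Iso.trans_hom, eqToIso.hom, Category.assoc, Submonoid.coe_mul] at hmul ⊢
    rw [(comp_eqToHom_iff _ _ _).1 hmul.symm]
    simp

end MCat

namespace MCat

variable {C : Type*} [Category C] [MulAction (Minj ℕ) C] (h : MCat ℕ C) {S : Set ℕ} {x : C}

lemma ι_hom_eq_eqToHom (hS : S.Finite) (hx : Supported S x) {u : Minj ℕ}
    (hu : u ∈ fixingSubmonoid (Minj ℕ) S) :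
    (h.ι u x).hom = eqToHom (hx.smul_eq_self hu).symm := by
  have htriv := Minj.monoidHom_fixingSubmonoid_eq_one hS
    ((h.stabilizerAut x).comp (Submonoid.inclusion (supported_iff_fixingSubmonoid_le.1 hx)))
  have hu1 : (h.ι u x).hom ≫ eqToHom (hx.smul_eq_self hu) = 𝟙 x :=
    congrArg Iso.hom (DFunLike.congr_fun htriv (⟨u, hu⟩ : fixingSubmonoid (Minj ℕ) S))
  rwa [comp_eqToHom_iff, Category.id_comp] at hu1

lemma ι_mul_hom_eq (hS : S.Finite) (hx : Supported S x) (π : Minj ℕ) {r : Minj ℕ}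
    (hr : r ∈ fixingSubmonoid (Minj ℕ) S) :
    (h.ι (π * r) x).hom = (h.ι π x).hom ≫ eqToHom (by rw [mul_smul, hx.smul_eq_self hr]) := by
  have hmul := h.ι_mul r π x
  rw [h.ι_hom_eq_eqToHom hS hx hr, h.ι_hom_congr π (hx.smul_eq_self hr)] at hmul
  rw [(comp_eqToHom_iff _ _ _).1 hmul.symm]
  simp

lemma ι_eq_of_eqOn (hS : S.Finite) (hx : Supported S x) {v w : Minj ℕ} (hvw : Set.EqOn v w S) :
    h.ι v x = h.ι w x ≪≫ eqToIso (hx.smul_eq_of_eqOn hS hvw).symm := by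
  obtain ⟨σ, hσ⟩ := Minj.exists_perm_eqOn hS (Minj.injective v).injOn
  obtain ⟨r, hr, rfl⟩ := Minj.exists_mem_fixingSubmonoid_eq_ofPerm_mul hσ
  obtain ⟨r', hr', rfl⟩ := Minj.exists_mem_fixingSubmonoid_eq_ofPerm_mul (hσ.trans hvw)
  ext
  rw [Iso.trans_hom, h.ι_mul_hom_eq hS hx _ hr, h.ι_mul_hom_eq hS hx _ hr']
  simp

end MCat

/-- If `v` and `w` agree on `supp x` and `x` is finitely supported, then `v • x = w • x`,
`ι(v,x) = ι(w,x)`, and consequently `[v,u]^x = [w,u]^x` and `[u,v]^x = [u,w]^x` for all `u`. -/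
theorem stmt13 (C : Type*) [Category C] [MulAction (Minj ℕ) C] (h : MCat ℕ C)
    (x : C) (hx : FinSupported (U := ℕ) x)
    (v w : Minj ℕ) (hvw : ∀ a ∈ supp (U := ℕ) x, v a = w a) :
    ∃ e : v • x = w • x,
      (h.ι v x).hom = (h.ι w x).hom ≫ eqToHom e.symm ∧
      (∀ u : Minj ℕ, h.tw v u x = h.tw w u x ≫ eqToHom e.symm) ∧
      (∀ u : Minj ℕ, h.tw u v x = eqToHom e ≫ h.tw u w x) := by
  obtain ⟨B, hsupp, hB⟩ := hx.exists_supp_eq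
  have hvwB : Set.EqOn v w B := fun a ha => hvw a (hsupp ▸ ha)
  have hι := h.ι_eq_of_eqOn B.finite_toSet hB hvwB
  exact ⟨hB.smul_eq_of_eqOn B.finite_toSet hvwB, by simp [hι], fun u => by simp [MCat.tw, hι],
    fun u => by simp [MCat.tw, hι]⟩
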